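/- arXiv:quant-ph/0206123 — 2 statements merged into one kernel-verified Lean document; each statement's English description precedes it below -/
import Mathlib

section
/- For any two density matrices σ₀ and σ₁ on a finite-dimensional complex Hilbert space, and any density matrix σ, the sum of fidelities satisfies F(σ₀, σ) + F(σ₁, σ) ≤ 1 + √(F(σ₀, σ₁)). -/
open Matrix
open scoped ComplexOrder

open scoped Classical in
/-- Square root of a positive semidefinite matrix (0 if not PSD). -/
noncomputable def matSqrt {n : ℕ} (A : Matrix (Fin n) (Fin n) ℂ) : Matrix (Fin n) (Fin n) ℂ :=
  if h : A.PosSemidef then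
    (h.1.eigenvectorUnitary : Matrix (Fin n) (Fin n) ℂ) *
      diagonal ((↑) ∘ Real.sqrt ∘ h.1.eigenvalues) *
      (star h.1.eigenvectorUnitary : Matrix (Fin n) (Fin n) ℂ)
  else 0

/-- Fidelity F(ρ,σ) = (Tr √(√ρ σ √ρ))². -/
noncomputable def fidelity {n : ℕ} (ρ σ : Matrix (Fin n) (Fin n) ℂ) : ℝ :=
  ((matSqrt (matSqrt ρ * σ * matSqrt ρ)).trace.re) ^ 2

/-- Trace norm ‖A‖_tr = Tr √(Aᴴ A). -/
noncomputable def traceNorm {n : ℕ} (A : Matrix (Fin n) (Fin n) ℂ) : ℝ :=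
  (matSqrt (Aᴴ * A)).trace.re

/-- A density matrix: positive semidefinite with unit trace. -/
def IsDensityMatrix {n : ℕ} (ρ : Matrix (Fin n) (Fin n) ℂ) : Prop :=
  ρ.PosSemidef ∧ ρ.trace = 1

/-!
With `aᵢ = ‖√σ √σᵢ‖_tr = √F(σᵢ, σ)`, work in the Hilbert–Schmidt space of matrices, where
`φ = √σ` and `ψᵢ = Uᵢ* √σᵢ` are unit vectors for all unitaries `Uᵢ`. Choosing `Uᵢ` from the polar
decomposition of `√σ √σᵢ` makes `|⟪ψᵢ, φ⟫| = aᵢ`, while `|⟪ψ₀, ψ₁⟫| = |Tr (U₀ U₁* √σ₁ √σ₀)|` is at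
most `‖√σ₁ √σ₀‖_tr = √F(σ₀, σ₁)` whatever the unitaries. It remains to show
`|⟪x, z⟫|² + |⟪y, z⟫|² ≤ 1 + |⟪x, y⟫|` for unit vectors `x, y, z`: apply Cauchy–Schwarz to `z`
and `⟪x, z⟫ • x + ⟪y, z⟫ • y`.
-/

open scoped InnerProductSpace

theorem LinearMap.exists_linearIsometry_apply_eq_of_norm_eq {𝕜 E V : Type*} [RCLike 𝕜]
    [AddCommGroup E] [Module 𝕜 E] [NormedAddCommGroup V] [InnerProductSpace 𝕜 V]
    [FiniteDimensional 𝕜 V] (f g : E →ₗ[𝕜] V) (h : ∀ x, ‖f x‖ = ‖g x‖) :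
    ∃ L : V →ₗᵢ[𝕜] V, ∀ x, L (g x) = f x := by
  have hker : ker g ≤ ker f := fun x hx => by
    rw [mem_ker, ← norm_eq_zero, h x, norm_eq_zero, ← mem_ker]
    exact hx
  let ℓ : range g →ₗ[𝕜] V := (ker g).liftQ f hker ∘ₗ g.quotKerEquivRange.symm.toLinearMap
  have hℓ : ∀ x, ℓ ⟨g x, mem_range_self g x⟩ = f x := fun x => by
    simp [ℓ, quotKerEquivRange_symm_apply_image]
  have hℓ_norm : ∀ s, ‖ℓ s‖ = ‖s‖ := by
    rintro ⟨-, x, rfl⟩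
    rw [hℓ, h]
    rfl
  exact ⟨LinearIsometry.extend ⟨ℓ, hℓ_norm⟩, fun x =>
    (LinearIsometry.extend_apply _ ⟨g x, mem_range_self g x⟩).trans (hℓ x)⟩

theorem sq_norm_inner_add_sq_norm_inner_le {𝕜 E : Type*} [RCLike 𝕜] [SeminormedAddCommGroup E]
    [InnerProductSpace 𝕜 E] {x y z : E} (hx : ‖x‖ = 1) (hy : ‖y‖ = 1) (hz : ‖z‖ = 1) :
    ‖⟪x, z⟫_𝕜‖ ^ 2 + ‖⟪y, z⟫_𝕜‖ ^ 2 ≤ 1 + ‖⟪x, y⟫_𝕜‖ := by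
  set α := ⟪x, z⟫_𝕜
  set β := ⟪y, z⟫_𝕜
  set s := ‖α‖ ^ 2 + ‖β‖ ^ 2
  set c := ‖⟪x, y⟫_𝕜‖
  let v := α • x + β • y
  have hs_le : s ≤ ‖v‖ := by
    have hvz : ⟪v, z⟫_𝕜 = (s : 𝕜) := by
      rw [inner_add_left, inner_smul_left, inner_smul_left, RCLike.conj_mul, RCLike.conj_mul]
      simp only [s]
      push_cast
      ring
    calc s = ‖⟪v, z⟫_𝕜‖ := by rw [hvz, RCLike.norm_ofReal, abs_of_nonneg (by positivity)]
      _ ≤ ‖v‖ * ‖z‖ := norm_inner_le_norm v z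
      _ = ‖v‖ := by rw [hz, mul_one]
  have hv_sq : ‖v‖ ^ 2 ≤ s * (1 + c) := by
    have hcross : RCLike.re ⟪α • x, β • y⟫_𝕜 ≤ ‖α‖ * ‖β‖ * c :=
      calc RCLike.re ⟪α • x, β • y⟫_𝕜 ≤ ‖⟪α • x, β • y⟫_𝕜‖ := RCLike.re_le_norm _
        _ = ‖α‖ * ‖β‖ * c := by
          rw [inner_smul_left, inner_smul_right, norm_mul, norm_mul, RCLike.norm_conj, mul_assoc]
    rw [norm_add_sq (𝕜 := 𝕜), norm_smul, norm_smul, hx, hy]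
    nlinarith [mul_nonneg (norm_nonneg ⟪x, y⟫_𝕜) (sq_nonneg (‖α‖ - ‖β‖))]
  have hs : 0 ≤ s := by positivity
  nlinarith [norm_nonneg ⟪x, y⟫_𝕜]

section

variable {n : ℕ}

lemma matSqrt_posSemidef {A : Matrix (Fin n) (Fin n) ℂ} (h : A.PosSemidef) :
    (matSqrt A).PosSemidef := by
  rw [matSqrt, dif_pos h]
  apply PosSemidef.mul_mul_conjTranspose_same
  rw [posSemidef_diagonal_iff]
  exact fun i => Complex.zero_le_real.mpr (Real.sqrt_nonneg _)

lemma matSqrt_mul_self {A : Matrix (Fin n) (Fin n) ℂ} (h : A.PosSemidef) :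
    matSqrt A * matSqrt A = A := by
  rw [matSqrt, dif_pos h]
  conv_rhs => rw [h.1.spectral_theorem, Unitary.conjStarAlgAut_apply]
  have hu : (star h.1.eigenvectorUnitary : Matrix (Fin n) (Fin n) ℂ) *
      (h.1.eigenvectorUnitary : Matrix (Fin n) (Fin n) ℂ) = 1 := Unitary.coe_star_mul_self _
  simp only [Matrix.mul_assoc]
  rw [← Matrix.mul_assoc (star (h.1.eigenvectorUnitary : Matrix (Fin n) (Fin n) ℂ)), hu,
    Matrix.one_mul, ← Matrix.mul_assoc (diagonal _), diagonal_mul_diagonal]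
  congr 3
  funext i
  simp only [Function.comp_apply]
  rw [← Complex.ofReal_mul, Real.mul_self_sqrt (h.eigenvalues_nonneg i)]
  rfl

lemma conjTranspose_matSqrt {A : Matrix (Fin n) (Fin n) ℂ} (h : A.PosSemidef) :
    (matSqrt A)ᴴ = matSqrt A :=
  (matSqrt_posSemidef h).isHermitian

lemma Matrix.PosSemidef.ofReal_re_trace {m : Type*} [Fintype m] {A : Matrix m m ℂ}
    (h : A.PosSemidef) : (A.trace.re : ℂ) = A.trace :=
  (Complex.eq_re_of_ofReal_le (Complex.ofReal_zero.symm ▸ h.trace_nonneg)).symm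

lemma traceNorm_nonneg (A : Matrix (Fin n) (Fin n) ℂ) : 0 ≤ traceNorm A :=
  (Complex.nonneg_iff.mp
    (matSqrt_posSemidef (posSemidef_conjTranspose_mul_self A)).trace_nonneg).1

lemma fidelity_eq_traceNorm_sq {ρ σ : Matrix (Fin n) (Fin n) ℂ} (hρ : ρ.PosSemidef)
    (hσ : σ.PosSemidef) : fidelity ρ σ = traceNorm (matSqrt σ * matSqrt ρ) ^ 2 := by
  have h : matSqrt ρ * matSqrt σ * (matSqrt σ * matSqrt ρ) = matSqrt ρ * σ * matSqrt ρ := by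
    rw [Matrix.mul_assoc, ← Matrix.mul_assoc (matSqrt σ), matSqrt_mul_self hσ, Matrix.mul_assoc]
  rw [fidelity, traceNorm, conjTranspose_mul, conjTranspose_matSqrt hρ, conjTranspose_matSqrt hσ,
    h]

lemma exists_mem_unitaryGroup_eq_mul_matSqrt (A : Matrix (Fin n) (Fin n) ℂ) :
    ∃ U ∈ unitaryGroup (Fin n) ℂ, A = U * matSqrt (Aᴴ * A) := by
  set P := matSqrt (Aᴴ * A)
  have hPP : star P * P = star A * A := by
    rw [star_eq_conjTranspose, conjTranspose_matSqrt (posSemidef_conjTranspose_mul_self A),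
      matSqrt_mul_self (posSemidef_conjTranspose_mul_self A), star_eq_conjTranspose]
  have hnorm : ∀ x, ‖toEuclideanCLM (𝕜 := ℂ) A x‖ = ‖toEuclideanCLM (𝕜 := ℂ) P x‖ := fun x => by
    simp only [ContinuousLinearMap.apply_norm_eq_sqrt_inner_adjoint_left,
      ← ContinuousLinearMap.star_eq_adjoint, ← ContinuousLinearMap.mul_def, ← map_star, ← map_mul,
      hPP]
  obtain ⟨L, hL⟩ := LinearMap.exists_linearIsometry_apply_eq_of_norm_eq
    (toEuclideanCLM (𝕜 := ℂ) A).toLinearMap (toEuclideanCLM (𝕜 := ℂ) P).toLinearMap hnorm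
  refine ⟨(toEuclideanCLM (n := Fin n) (𝕜 := ℂ)).symm L.toContinuousLinearMap, ?_, ?_⟩
  · rw [mem_unitaryGroup_iff']
    apply EquivLike.injective (toEuclideanCLM (n := Fin n) (𝕜 := ℂ))
    rw [map_mul, map_star, StarAlgEquiv.apply_symm_apply, map_one,
      ContinuousLinearMap.star_eq_adjoint]
    exact L.adjoint_comp_self
  · apply EquivLike.injective (toEuclideanCLM (n := Fin n) (𝕜 := ℂ))
    rw [map_mul, StarAlgEquiv.apply_symm_apply]
    ext1 x
    exact (hL x).symm

lemma exists_mem_unitaryGroup_trace_mul_eq_traceNorm (A : Matrix (Fin n) (Fin n) ℂ) :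
    ∃ U ∈ unitaryGroup (Fin n) ℂ, (U * A).trace = traceNorm A := by
  obtain ⟨W, hW, hA⟩ := exists_mem_unitaryGroup_eq_mul_matSqrt A
  refine ⟨star W, Unitary.star_mem hW, ?_⟩
  calc (star W * A).trace = (star W * W * matSqrt (Aᴴ * A)).trace := by
        rw [Matrix.mul_assoc, ← hA]
    _ = traceNorm A := by
        rw [Unitary.star_mul_self_of_mem hW, Matrix.one_mul, traceNorm,
          (matSqrt_posSemidef (posSemidef_conjTranspose_mul_self A)).ofReal_re_trace]

noncomputable local instance : SeminormedAddCommGroup (Matrix (Fin n) (Fin n) ℂ) :=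
  toMatrixSeminormedAddCommGroup 1 PosSemidef.one

noncomputable local instance : InnerProductSpace ℂ (Matrix (Fin n) (Fin n) ℂ) :=
  toMatrixInnerProductSpace 1 PosSemidef.one

lemma inner_eq_trace_mul_conjTranspose (X Y : Matrix (Fin n) (Fin n) ℂ) :
    ⟪X, Y⟫_ℂ = (Y * Xᴴ).trace := by
  change (Y * 1 * Xᴴ).trace = _
  rw [Matrix.mul_one]

lemma norm_sq_eq_re_trace_mul_conjTranspose (X : Matrix (Fin n) (Fin n) ℂ) :
    ‖X‖ ^ 2 = (X * Xᴴ).trace.re := by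
  rw [norm_sq_eq_re_inner (𝕜 := ℂ), inner_eq_trace_mul_conjTranspose]
  rfl

lemma norm_unitary_mul {U : Matrix (Fin n) (Fin n) ℂ} (hU : U ∈ unitaryGroup (Fin n) ℂ)
    (X : Matrix (Fin n) (Fin n) ℂ) : ‖U * X‖ = ‖X‖ := by
  have h : (U * X * (U * X)ᴴ).trace = (X * Xᴴ).trace := by
    rw [conjTranspose_mul, ← star_eq_conjTranspose U, Matrix.mul_assoc, Matrix.trace_mul_comm]
    simp only [Matrix.mul_assoc, Unitary.star_mul_self_of_mem hU, Matrix.mul_one]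
  rw [← pow_left_inj₀ (norm_nonneg _) (norm_nonneg _) two_ne_zero,
    norm_sq_eq_re_trace_mul_conjTranspose, norm_sq_eq_re_trace_mul_conjTranspose, h]

lemma norm_matSqrt {ρ : Matrix (Fin n) (Fin n) ℂ} (hρ : IsDensityMatrix ρ) :
    ‖matSqrt ρ‖ = 1 := by
  rw [← pow_left_inj₀ (norm_nonneg _) zero_le_one two_ne_zero,
    norm_sq_eq_re_trace_mul_conjTranspose, conjTranspose_matSqrt hρ.1, matSqrt_mul_self hρ.1, hρ.2,
    one_pow, Complex.one_re]

lemma norm_trace_mul_le_traceNorm {U : Matrix (Fin n) (Fin n) ℂ}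
    (hU : U ∈ unitaryGroup (Fin n) ℂ) (A : Matrix (Fin n) (Fin n) ℂ) :
    ‖(U * A).trace‖ ≤ traceNorm A := by
  obtain ⟨W, hW, hA⟩ := exists_mem_unitaryGroup_eq_mul_matSqrt A
  have hP := matSqrt_posSemidef (posSemidef_conjTranspose_mul_self A)
  set P := matSqrt (Aᴴ * A)
  set G := matSqrt P
  have hGG : G * G = P := matSqrt_mul_self hP
  have hG : ‖G‖ ^ 2 = traceNorm A := by
    rw [norm_sq_eq_re_trace_mul_conjTranspose, conjTranspose_matSqrt hP, hGG]
    rfl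
  -- `Tr(U A) = Tr(U W G G)` is a Hilbert–Schmidt inner product, bounded by Cauchy–Schwarz
  have htr : (U * A).trace = ⟪G, U * W * G⟫_ℂ := by
    rw [inner_eq_trace_mul_conjTranspose, conjTranspose_matSqrt hP, Matrix.mul_assoc (U * W),
      hGG, Matrix.mul_assoc, ← hA]
  calc ‖(U * A).trace‖ = ‖⟪G, U * W * G⟫_ℂ‖ := by rw [htr]
    _ ≤ ‖G‖ * ‖U * W * G‖ := norm_inner_le_norm _ _
    _ = traceNorm A := by rw [norm_unitary_mul (mul_mem hU hW), ← sq, hG]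

lemma norm_trace_sq_add_norm_trace_sq_le {ρ₀ ρ₁ σ U₀ U₁ : Matrix (Fin n) (Fin n) ℂ}
    (h₀ : IsDensityMatrix ρ₀) (h₁ : IsDensityMatrix ρ₁) (h : IsDensityMatrix σ)
    (hU₀ : U₀ ∈ unitaryGroup (Fin n) ℂ) (hU₁ : U₁ ∈ unitaryGroup (Fin n) ℂ) :
    ‖(U₀ * (matSqrt σ * matSqrt ρ₀)).trace‖ ^ 2 + ‖(U₁ * (matSqrt σ * matSqrt ρ₁)).trace‖ ^ 2 ≤
      1 + ‖(U₀ * star U₁ * (matSqrt ρ₁ * matSqrt ρ₀)).trace‖ := by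
  have hψ : ∀ {ρ U : Matrix (Fin n) (Fin n) ℂ}, IsDensityMatrix ρ → U ∈ unitaryGroup (Fin n) ℂ →
      ‖star U * matSqrt ρ‖ = 1 := fun hρ hU => by
    rw [norm_unitary_mul (Unitary.star_mem hU), norm_matSqrt hρ]
  have hψσ : ∀ {ρ U : Matrix (Fin n) (Fin n) ℂ}, ρ.PosSemidef →
      ⟪star U * matSqrt ρ, matSqrt σ⟫_ℂ = (U * (matSqrt σ * matSqrt ρ)).trace := fun hρ => by
    rw [inner_eq_trace_mul_conjTranspose, conjTranspose_mul, conjTranspose_matSqrt hρ,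
      ← star_eq_conjTranspose, star_star, ← Matrix.mul_assoc, Matrix.trace_mul_comm]
  have hψψ : ⟪star U₀ * matSqrt ρ₀, star U₁ * matSqrt ρ₁⟫_ℂ =
      (U₀ * star U₁ * (matSqrt ρ₁ * matSqrt ρ₀)).trace := by
    rw [inner_eq_trace_mul_conjTranspose, conjTranspose_mul, conjTranspose_matSqrt h₀.1,
      ← star_eq_conjTranspose, star_star, ← Matrix.mul_assoc, Matrix.trace_mul_comm]
    simp only [Matrix.mul_assoc]
  have key :=
    sq_norm_inner_add_sq_norm_inner_le (𝕜 := ℂ) (hψ h₀ hU₀) (hψ h₁ hU₁) (norm_matSqrt h)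
  rwa [hψσ h₀.1, hψσ h₁.1, hψψ] at key

end

theorem fidelity_sum_le {n : ℕ} (σ₀ σ₁ σ : Matrix (Fin n) (Fin n) ℂ)
    (h₀ : IsDensityMatrix σ₀) (h₁ : IsDensityMatrix σ₁) (h : IsDensityMatrix σ) :
    fidelity σ₀ σ + fidelity σ₁ σ ≤ 1 + Real.sqrt (fidelity σ₀ σ₁) := by
  obtain ⟨U₀, hU₀, ha₀⟩ := exists_mem_unitaryGroup_trace_mul_eq_traceNorm (matSqrt σ * matSqrt σ₀)
  obtain ⟨U₁, hU₁, ha₁⟩ := exists_mem_unitaryGroup_trace_mul_eq_traceNorm (matSqrt σ * matSqrt σ₁)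
  have hcross := norm_trace_mul_le_traceNorm (mul_mem hU₀ (Unitary.star_mem hU₁))
    (matSqrt σ₁ * matSqrt σ₀)
  have key := norm_trace_sq_add_norm_trace_sq_le h₀ h₁ h hU₀ hU₁
  rw [ha₀, ha₁, Complex.norm_real, Complex.norm_real, Real.norm_of_nonneg (traceNorm_nonneg _),
    Real.norm_of_nonneg (traceNorm_nonneg _)] at key
  rw [fidelity_eq_traceNorm_sq h₀.1 h.1, fidelity_eq_traceNorm_sq h₁.1 h.1,
    fidelity_eq_traceNorm_sq h₀.1 h₁.1, Real.sqrt_sq (traceNorm_nonneg _)]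
  linarith
end

section
/- For all real α and β with cos(α/2) ≠ 0 or sin(α/2) ≠ 0, define λ = sin²(α/2) / ((1 + sin²(β/2))·cos²(α/2) + sin²(α/2)). Then (√(((1-λ)/2)·(1 + sin²(β/2))) · cos(α/2) + √(λ/2) · sin(α/2))² = (1/2)·(1 + cos²(α/2)·sin²(β/2)), provided cos(α/2) ≥ 0 and sin(α/2) ≥ 0. -/
open Real

/-- Writing `D = w c² + s²`, the two square roots are `w c / √(2D)` and `s / √(2D)`, so the sum is
`D / √(2D)`: this choice of `l` is the equality case of Cauchy–Schwarz. -/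
theorem sq_sqrt_mul_add_sqrt_mul_eq (w c s : ℝ) (hw : 0 ≤ w) (hc : 0 ≤ c) (hs : 0 ≤ s) :
    let l := s ^ 2 / (w * c ^ 2 + s ^ 2)
    (√((1 - l) / 2 * w) * c + √(l / 2) * s) ^ 2 = (w * c ^ 2 + s ^ 2) / 2 := by
  dsimp only
  generalize hD : w * c ^ 2 + s ^ 2 = D
  rcases (show 0 ≤ D by rw [← hD]; positivity).eq_or_lt with hD0 | hDpos
  · have hs0 : s = 0 := by nlinarith [mul_nonneg hw (sq_nonneg c)]
    subst hs0 hD0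
    simp only [ne_eq, OfNat.ofNat_ne_zero, not_false_eq_true, zero_pow, div_zero, sub_zero,
      mul_zero, add_zero] at hD ⊢
    rw [mul_pow, sq_sqrt (by positivity)]
    linarith
  have hroot : 0 < √(2 * D) := by positivity
  have hfirst : √((1 - s ^ 2 / D) / 2 * w) = w * c / √(2 * D) := by
    rw [← sqrt_sq (by positivity : 0 ≤ w * c / √(2 * D)), div_pow, sq_sqrt (by positivity)]
    congr 1
    field_simp
    linear_combination -w * hD
  have hsecond : √(s ^ 2 / D / 2) = s / √(2 * D) := by
    rw [← sqrt_sq (by positivity : 0 ≤ s / √(2 * D)), div_pow, sq_sqrt (by positivity)]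
    congr 1
    field_simp
  calc (√((1 - s ^ 2 / D) / 2 * w) * c + √(s ^ 2 / D / 2) * s) ^ 2 = D ^ 2 / √(2 * D) ^ 2 := by
        rw [hfirst, hsecond, ← hD]
        field_simp
    _ = D / 2 := by
        rw [sq_sqrt (by positivity)]
        field_simp

theorem alice_five_round_success_general (α β : ℝ)
    (hc : Real.cos (α / 2) ≥ 0) (hs : Real.sin (α / 2) ≥ 0) :
    let l := Real.sin (α / 2) ^ 2 /
      ((1 + Real.sin (β / 2) ^ 2) * Real.cos (α / 2) ^ 2 + Real.sin (α / 2) ^ 2)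
    (Real.sqrt (((1 - l) / 2) * (1 + Real.sin (β / 2) ^ 2)) * Real.cos (α / 2) +
        Real.sqrt (l / 2) * Real.sin (α / 2)) ^ 2 =
      (1 / 2) * (1 + Real.cos (α / 2) ^ 2 * Real.sin (β / 2) ^ 2) :=
  (sq_sqrt_mul_add_sqrt_mul_eq _ _ _ (by positivity) hc hs).trans
    (by linear_combination Real.sin_sq_add_cos_sq (α / 2) / 2)

theorem alice_five_round_success (α β : ℝ)
    (hne : Real.cos (α / 2) ≠ 0 ∨ Real.sin (α / 2) ≠ 0)
    (hc : Real.cos (α / 2) ≥ 0) (hs : Real.sin (α / 2) ≥ 0) :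
    let l := Real.sin (α / 2) ^ 2 /
      ((1 + Real.sin (β / 2) ^ 2) * Real.cos (α / 2) ^ 2 + Real.sin (α / 2) ^ 2)
    (Real.sqrt (((1 - l) / 2) * (1 + Real.sin (β / 2) ^ 2)) * Real.cos (α / 2) +
        Real.sqrt (l / 2) * Real.sin (α / 2)) ^ 2 =
      (1 / 2) * (1 + Real.cos (α / 2) ^ 2 * Real.sin (β / 2) ^ 2) :=
  alice_five_round_success_general α β hc hs
end
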